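/- Let (R, m, k) be a one-dimensional Cohen–Macaulay local ring with infinite residue field admitting a canonical module ω_R with R ⊆ ω_R ⊆ R̄, and set B = m:m. If R is gAGL, B is local with maximal ideal n, and R/m ≅ B/n, then m² ⊆ R:ω_R². -/

import Mathlib

/- Common definitions: fractional ideals in the total ring of fractions, canonical
ideals (via the Herzog–Kunz criterion), reductions, (almost) canonical ideals and
(almost) Gorenstein rings, for one-dimensional Cohen–Macaulay rings.
Throughout, the total ring of fractions `Q(R)` is `FractionRing R` and fractional
ideals are submodules of it. -/

set_option maxHeartbeats 1600000
set_option synthInstance.maxHeartbeats 800000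

noncomputable section

open IsLocalRing Submodule

variable (T A : Type*) [CommRing T] [CommRing A] [Algebra T A]

/-- The submodule of the `T`-algebra `A` generated by the image of an ideal of `T`. -/
def idealSub (I : Ideal T) : Submodule T A := Submodule.map (Algebra.linearMap T A) I

/-- The `Localization S`-algebra structure on `LocalizedModule S A` (a global instance in the older library). -/
instance locModAlgebra {R : Type*} [CommSemiring R] {S : Submonoid R} {A : Type*} [Semiring A]
    [Algebra R A] : Algebra (Localization S) (LocalizedModule S A) :=
  Algebra.ofModule
    (fun x p q => by
      induction x using Localization.induction_on with | H x => ?_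
      induction p using LocalizedModule.induction_on with | h a s => ?_
      induction q using LocalizedModule.induction_on with | h b t => ?_
      rw [LocalizedModule.mk_mul_mk, LocalizedModule.mk_smul_mk, LocalizedModule.mk_smul_mk,
        LocalizedModule.mk_mul_mk, smul_mul_assoc, mul_assoc])
    (fun x p q => by
      induction x using Localization.induction_on with | H x => ?_
      induction p using LocalizedModule.induction_on with | h a s => ?_
      induction q using LocalizedModule.induction_on with | h b t => ?_
      rw [LocalizedModule.mk_mul_mk, LocalizedModule.mk_smul_mk, LocalizedModule.mk_smul_mk,
        LocalizedModule.mk_mul_mk, mul_smul_comm, mul_left_comm])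

/-- The maximal ideal of the local ring `T`, viewed inside `A`. -/
def maxSub [IsLocalRing T] : Submodule T A := idealSub T A (maximalIdeal T)

/-- The Jacobson radical of `T`, viewed inside `A`. -/
def jacSub : Submodule T A := Submodule.map (Algebra.linearMap T A) ((⊥ : Ideal T).jacobson)

/-- The integral closure of `T` in `A`, as a submodule of `A`. -/
def intCl : Submodule T A := Subalgebra.toSubmodule (integralClosure T A)

/-- `I` is a fractional ideal of `T` inside `A` (`A` playing the role of the total ring
of fractions of `T`): `I` contains an invertible element and has bounded denominators. -/
def IsFracIdeal (I : Submodule T A) : Prop :=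
  (∃ u : Aˣ, (u : A) ∈ I) ∧ ∃ r ∈ nonZeroDivisors T, ∀ x ∈ I, r • x ∈ (1 : Submodule T A)

/-- The length `ℓ_T(N/I)` of the subquotient `N/(I ∩ N)`, defined as the Krull dimension
of its lattice of submodules. -/
def relLength (I N : Submodule T A) : WithBot ℕ∞ :=
  Order.krullDim (Submodule T (↥N ⧸ (I.comap N.subtype)))

/-- Herzog–Kunz criterion: a fractional ideal `ω` of `T` is a canonical module of `T` iff
`ℓ_T((ω : n)/ω) = 1` for every maximal ideal `n` of `T`. -/
def IsCanonicalIdeal (ω : Submodule T A) : Prop :=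
  IsFracIdeal T A ω ∧ ∀ n : Ideal T, n.IsMaximal → relLength T A ω (ω / idealSub T A n) = 1

/-- `z ∈ J` is a reduction of the fractional ideal `J`: `z J^n = J^{n+1}` for some `n`. -/
def IsReductionOf (z : A) (J : Submodule T A) : Prop :=
  z ∈ J ∧ ∃ n : ℕ, J ^ (n + 1) = span T {z} * J ^ n

/-- Almost canonical ideal over a local ring `T` (with respect to a canonical module `ω`,
`T ⊆ ω ⊆ T̄`): for a (regular) reduction `z` of `ω : I` one has `ω : (m:m) ⊆ zI`. -/
def IsAlmostCanonicalLoc [IsLocalRing T] (ω I : Submodule T A) : Prop :=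
  ∃ z : A, IsUnit z ∧ IsReductionOf T A z (ω / I) ∧
    ω / (maxSub T A / maxSub T A) ≤ span T {z} * I

/-- Almost canonical ideal over a (not necessarily local) ring: the localization at every
maximal ideal is an almost canonical ideal of the localized ring. -/
def IsAlmostCanonical (ω I : Submodule T A) : Prop :=
  ∀ (p : Ideal T) (hp : p.IsMaximal),
    letI := hp.isPrime
    IsAlmostCanonicalLoc (Localization.AtPrime p) (LocalizedModule p.primeCompl A)
      (ω.localized p.primeCompl) (I.localized p.primeCompl)

/-- `S` is a discrete valuation ring. -/
def IsDVR (S : Type*) [CommRing S] : Prop :=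
  ∃ h : IsDomain S, @IsDiscreteValuationRing S _ h

/-- A one-dimensional Cohen–Macaulay local ring `S` is almost Gorenstein if `m ω ⊆ m`
for a canonical module `S ⊆ ω ⊆ S̄` of `S`. -/
def IsAlmostGorensteinLoc (S : Type*) [CommRing S] [IsLocalRing S] : Prop :=
  ∃ ω : Submodule S (FractionRing S),
    IsCanonicalIdeal S (FractionRing S) ω ∧ 1 ≤ ω ∧
      ω ≤ intCl S (FractionRing S) ∧
      maxSub S (FractionRing S) * ω ≤ maxSub S (FractionRing S)

/-- A ring is almost Gorenstein if its localization at every maximal ideal is. -/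
def IsAlmostGorenstein (S : Type*) [CommRing S] : Prop :=
  ∀ (p : Ideal S) (hp : p.IsMaximal),
    letI := hp.isPrime
    IsAlmostGorensteinLoc (Localization.AtPrime p)

/-- A minimal system of generators of the maximal ideal of a local ring. -/
def IsMinGenSys (S : Type*) [CommRing S] [IsLocalRing S] {n : ℕ} (g : Fin n → S) : Prop :=
  Ideal.span (Set.range g) = maximalIdeal S ∧
    ∀ i : Fin n, Ideal.span (g '' {j | j ≠ i}) ≠ maximalIdeal S

/-- `R` is a generalized almost Gorenstein local (gAGL) ring, with respect to the
canonical module `ω` and the ring `B = m:m`: `m ω J(B) ⊆ R`. -/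
def IsGAGL (R : Type*) [CommRing R] [IsLocalRing R] (ω : Submodule R (FractionRing R))
    (B : Subalgebra R (FractionRing R)) : Prop :=
  maxSub R (FractionRing R) * ω *
      ((jacSub ↥B (FractionRing R)).restrictScalars R) ≤ 1

/-- `1` is a reduction of the localization `J_p` of the fractional ideal `J` at the
submonoid `p` (for `p` the complement of a maximal ideal, this is the localization of
`J` at that maximal ideal): `1 ∈ J_p` and `(J_p)^{n+1} = (J_p)^n` for some `n`. -/
def IsOneReductionOfLocalization (p : Submonoid T) (J : Submodule T A) : Prop :=
  (1 : LocalizedModule p A) ∈ J.localized p ∧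
    ∃ n : ℕ, (J.localized p) ^ (n + 1) = (J.localized p) ^ n

/- Since `R̄` is integral over `R`, lying over shows that no element of `m R̄` is a unit of `R̄`.
Hence `R ∩ m R̄ = m`, and, as `B = m:m ⊆ R̄`, every element of `B ∩ m R̄` lies in the maximal
ideal `n` of `B`. For `y ∈ m ω` and `a ∈ m ⊆ n` the gAGL condition gives `y a ∈ R ∩ m R̄ = m`,
so `m ω ⊆ B ∩ m R̄ ⊆ n` and `m² ω² = (m ω)(m ω) ⊆ m ω n ⊆ R`. -/

section IntegralClosure

variable {R A : Type*} [CommRing R] [CommRing A] [Algebra R A]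

theorem one_le_intCl : (1 : Submodule R A) ≤ intCl R A := fun x hx => by
  obtain ⟨r, rfl⟩ := mem_one.mp hx
  exact isIntegral_algebraMap

theorem mul_intCl_mul_intCl_le (I : Submodule R A) :
    I * intCl R A * intCl R A ≤ I * intCl R A := by
  rw [mul_assoc]
  refine mul_le_mul_right ?_ I
  exact mul_le.mpr fun x hx y hy => (integralClosure R A).mul_mem hx hy

variable [IsLocalRing R]

theorem algebraMap_mem_maxSub {a : R} (ha : a ∈ maximalIdeal R) :
    algebraMap R A a ∈ maxSub R A :=
  mem_map_of_mem (f := Algebra.linearMap R A) ha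

theorem maxSub_le_one : maxSub R A ≤ 1 := by
  rintro _ ⟨a, -, rfl⟩
  exact mem_one.mpr ⟨a, rfl⟩

theorem one_notMem_maxSub_mul_intCl [Nontrivial A] : (1 : A) ∉ maxSub R A * intCl R A := by
  let f := algebraMap R (integralClosure R A)
  have hker : RingHom.ker f ≤ maximalIdeal R := le_maximalIdeal (RingHom.ker_ne_top f)
  have hproper : (maximalIdeal R).map f ≠ ⊤ := by
    rw [Ne, Ideal.map_eq_top_iff_of_ker_le f hker (algebraMap_isIntegral_iff.mpr inferInstance)]
    exact (maximalIdeal.isMaximal R).ne_top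
  have hle : maxSub R A * intCl R A ≤
      (((maximalIdeal R).map f).restrictScalars R).map (integralClosure R A).val.toLinearMap := by
    refine mul_le.mpr ?_
    rintro _ ⟨a, ha, rfl⟩ t ht
    refine ⟨f a * ⟨t, ht⟩, Ideal.mul_mem_right _ _ (Ideal.mem_map_of_mem f ha), ?_⟩
    simp [f, Algebra.linearMap_apply]
  intro h1
  obtain ⟨s, hs, hs1⟩ := hle h1
  have : s = 1 := Subtype.ext hs1
  exact hproper ((Ideal.eq_top_iff_one _).mpr (this ▸ hs))

theorem mul_ne_one_of_mem_maxSub_mul_intCl [Nontrivial A] {x y : A}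
    (hx : x ∈ maxSub R A * intCl R A) (hy : y ∈ intCl R A) : x * y ≠ 1 := fun h =>
  one_notMem_maxSub_mul_intCl (h ▸ mul_intCl_mul_intCl_le _ (mul_mem_mul hx hy))

theorem mem_maxSub_of_mem_one_of_mem_maxSub_mul_intCl [Nontrivial A] {x : A}
    (h1 : x ∈ (1 : Submodule R A)) (hx : x ∈ maxSub R A * intCl R A) : x ∈ maxSub R A := by
  obtain ⟨r, rfl⟩ := mem_one.mp h1
  refine algebraMap_mem_maxSub ((mem_maximalIdeal r).mpr fun ⟨u, hu⟩ => ?_)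
  refine mul_ne_one_of_mem_maxSub_mul_intCl hx (one_le_intCl (mem_one.mpr ⟨(u⁻¹ : Rˣ), rfl⟩)) ?_
  rw [← hu, ← map_mul, Units.mul_inv, map_one]

/-- `m:m` embeds into the finitely generated `R`-module `c⁻¹R`, hence is integral over `R`. -/
theorem toSubmodule_le_intCl_of_le_maxSub_div_maxSub [IsNoetherianRing R]
    {c : R} (hc : c ∈ maximalIdeal R) (hcu : IsUnit (algebraMap R A c))
    (S : Subalgebra R A) (hS : Subalgebra.toSubmodule S ≤ maxSub R A / maxSub R A) :
    Subalgebra.toSubmodule S ≤ intCl R A := by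
  obtain ⟨u, hu⟩ := hcu
  have hle : Subalgebra.toSubmodule S ≤ span R {((u⁻¹ : Aˣ) : A)} := by
    intro x hx
    obtain ⟨r, hr⟩ := mem_one.mp <| maxSub_le_one (mem_div_iff_forall_mul_mem.mp (hS hx) _
      (algebraMap_mem_maxSub hc))
    refine mem_span_singleton.mpr ⟨r, ?_⟩
    rw [Algebra.smul_def, hr, ← hu, mul_assoc, Units.mul_inv, mul_one]
  have : IsNoetherian R (Subalgebra.toSubmodule S) := isNoetherian_of_le hle
  exact fun x hx => isIntegral_of_submodule_noetherian S this x hx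

end IntegralClosure

section MaximalIdealOfColon

variable {R A : Type*} [CommRing R] [IsLocalRing R] [CommRing A] [Nontrivial A] [Algebra R A]
  (B : Subalgebra R A) [IsLocalRing B]

theorem mem_jacSub_of_mem_maxSub_mul_intCl (hBint : Subalgebra.toSubmodule B ≤ intCl R A)
    {x : A} (hx : x ∈ maxSub R A * intCl R A) (hxB : x ∈ B) :
    x ∈ (jacSub B A).restrictScalars R := by
  have hnonunit : ¬IsUnit (⟨x, hxB⟩ : B) := fun ⟨u, hu⟩ => by
    have h1 : (⟨x, hxB⟩ : B) * ↑u⁻¹ = 1 := by rw [← hu, Units.mul_inv]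
    exact mul_ne_one_of_mem_maxSub_mul_intCl hx (hBint (u⁻¹ : Bˣ).val.2)
      (congrArg Subtype.val h1)
  rw [restrictScalars_mem, jacSub, jacobson_eq_maximalIdeal ⊥ bot_ne_top]
  exact ⟨⟨x, hxB⟩, (mem_maximalIdeal _).mpr hnonunit, rfl⟩

theorem maxSub_le_jacSub (hBint : Subalgebra.toSubmodule B ≤ intCl R A) :
    maxSub R A ≤ (jacSub B A).restrictScalars R := by
  rintro _ ⟨a, ha, rfl⟩
  refine mem_jacSub_of_mem_maxSub_mul_intCl B hBint ?_ (B.algebraMap_mem a)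
  simpa using mul_mem_mul (algebraMap_mem_maxSub (A := A) ha)
    (one_le_intCl (mem_one.mpr ⟨1, map_one _⟩))

theorem maxSub_mul_le_jacSub (hB : Subalgebra.toSubmodule B = maxSub R A / maxSub R A)
    (hBint : Subalgebra.toSubmodule B ≤ intCl R A) {ω : Submodule R A} (hω : ω ≤ intCl R A)
    (hgagl : maxSub R A * ω * (jacSub B A).restrictScalars R ≤ 1) :
    maxSub R A * ω ≤ (jacSub B A).restrictScalars R := by
  intro y hy
  have hyR : y ∈ maxSub R A * intCl R A := mul_le_mul_right hω _ hy
  refine mem_jacSub_of_mem_maxSub_mul_intCl B hBint hyR ?_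
  rw [← Subalgebra.mem_toSubmodule, hB, mem_div_iff_forall_mul_mem]
  intro a ha
  refine mem_maxSub_of_mem_one_of_mem_maxSub_mul_intCl
    (hgagl (mul_mem_mul hy (maxSub_le_jacSub B hBint ha))) ?_
  exact mul_intCl_mul_intCl_le _ (mul_mem_mul hyR (one_le_intCl (maxSub_le_one ha)))

end MaximalIdealOfColon

theorem stmt8_general (R : Type*) [CommRing R] [IsLocalRing R] [IsNoetherianRing R]
    (hCM : ∃ x ∈ maximalIdeal R, x ∈ nonZeroDivisors R)
    (ω : Submodule R (FractionRing R))
    (hω2 : ω ≤ intCl R (FractionRing R))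
    (B : Subalgebra R (FractionRing R))
    (hB : Subalgebra.toSubmodule B = maxSub R (FractionRing R) / maxSub R (FractionRing R))
    (hBloc : IsLocalRing ↥B)
    (hgagl : IsGAGL R ω B) :
    maxSub R (FractionRing R) * maxSub R (FractionRing R) ≤
      (1 : Submodule R (FractionRing R)) / (ω * ω) := by
  obtain ⟨c, hcm, hc⟩ := hCM
  have hBint := toSubmodule_le_intCl_of_le_maxSub_div_maxSub hcm
    (IsLocalization.map_units (FractionRing R) ⟨c, hc⟩) B hB.le
  have hmω := maxSub_mul_le_jacSub B hB hBint hω2 hgagl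
  rw [Submodule.le_div_iff_mul_le, mul_mul_mul_comm]
  exact (mul_le_mul_right hmω _).trans hgagl

/-- Lemma `R:omega^2`(1): if `R` is gAGL, `B = m:m` is local with maximal
ideal `n` and `R/m ≅ B/n`, then `m² ⊆ R:ω²`. -/
theorem stmt8 (R : Type*) [CommRing R] [IsLocalRing R] [IsNoetherianRing R]
    (hdim : ringKrullDim R = 1)
    (hCM : ∃ x ∈ maximalIdeal R, x ∈ nonZeroDivisors R)
    (hres : Infinite (ResidueField R))
    (ω : Submodule R (FractionRing R))
    (hω : IsCanonicalIdeal R (FractionRing R) ω) (hω1 : 1 ≤ ω)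
    (hω2 : ω ≤ intCl R (FractionRing R))
    (B : Subalgebra R (FractionRing R))
    (hB : Subalgebra.toSubmodule B = maxSub R (FractionRing R) / maxSub R (FractionRing R))
    (hBloc : IsLocalRing ↥B)
    (hresiso : Nonempty (ResidueField R ≃+* @IsLocalRing.ResidueField ↥B _ hBloc))
    (hgagl : IsGAGL R ω B) :
    maxSub R (FractionRing R) * maxSub R (FractionRing R) ≤
      (1 : Submodule R (FractionRing R)) / (ω * ω) :=
  stmt8_general R hCM ω hω2 B hB hBloc hgagl
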